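/- Let F = {f_1, …, f_m} be a t-sparse family of coverage functions on ground set [n] with |S| ≤ s for all S ∈ S, let F_i denote the multilinear extension of f_i, and let k ≥ 2. Then there exists a fractional k-coloring Y : [n] → Δ_k with at most m·k·t·s fractional elements such that F_i(Y_ℓ) = F_i(Y_{ℓ'}) for all i ∈ [m] and all colors ℓ, ℓ' ∈ [k]. -/

import Mathlib

/-!
Since `mlext (cov C) x = |C| - ∑_{S ∈ C} ∏_{j ∈ S} (1 - x j)`, it suffices to make the polynomials
`uncovered (S i)` take equal values on all color classes. Among such balanced colorings (the
uniform one is one of them) take one with the fewest fractional coordinates `Y j ℓ ∈ (0, 1)`. If it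
had more than `m k t s` fractional elements, we could greedily pick more than `m k` of them, no two
in a common set, since an element shares a set with at most `t s` elements. Shifting mass between
two fractional colors of each picked element changes every `uncovered (S i)` on every color class
affinely, so the `m k` values can be kept fixed along a nonzero direction; following it until a
coordinate reaches `0` or `1` gives a balanced coloring with fewer fractional coordinates.
-/

open Finset

/-- Coverage function determined by a multiset `C` of subsets of `[n]`:
`f(T) = Σ_{S ∈ C} min(|S ∩ T|, 1)`. -/
noncomputable def cov {n : ℕ} (C : Multiset (Finset (Fin n))) (T : Finset (Fin n)) : ℝ :=
  (C.map (fun s => min ((s ∩ T).card : ℝ) 1)).sum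

/-- Multilinear extension of a set function `f : 2^{[n]} → ℝ`. -/
noncomputable def mlext {n : ℕ} (f : Finset (Fin n) → ℝ) (x : Fin n → ℝ) : ℝ :=
  ∑ T : Finset (Fin n), f T * (∏ i ∈ T, x i) * (∏ j ∈ Tᶜ, (1 - x j))

/-- `Y` is a fractional `k`-coloring: each `Y j` lies in the simplex `Δ_k`. -/
def IsFracColoring {n k : ℕ} (Y : Fin n → Fin k → ℝ) : Prop :=
  ∀ j : Fin n, (∀ ℓ, 0 ≤ Y j ℓ ∧ Y j ℓ ≤ 1) ∧ (∑ ℓ, Y j ℓ) = 1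

lemma sum_prod_mul_prod_compl {ι R : Type*} [Fintype ι] [DecidableEq ι] [CommSemiring R]
    (f g : ι → R) :
    ∑ T : Finset ι, (∏ i ∈ T, f i) * ∏ i ∈ Tᶜ, g i = ∏ i, (f i + g i) := by
  simp [Finset.prod_add, Finset.compl_eq_univ_sdiff]

lemma mlext_const {n : ℕ} (c : ℝ) (x : Fin n → ℝ) : mlext (fun _ => c) x = c := by
  simp_rw [mlext, mul_assoc, ← Finset.mul_sum, sum_prod_mul_prod_compl, add_sub_cancel,
    Finset.prod_const_one, mul_one]

lemma mlext_sub {n : ℕ} (f g : Finset (Fin n) → ℝ) (x : Fin n → ℝ) :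
    mlext (fun T => f T - g T) x = mlext f x - mlext g x := by
  simp_rw [mlext, ← Finset.sum_sub_distrib, sub_mul]

lemma mlext_multiset_sum {n : ℕ} {α : Type*} (C : Multiset α) (g : α → Finset (Fin n) → ℝ)
    (x : Fin n → ℝ) :
    mlext (fun T => (C.map fun a => g a T).sum) x = (C.map fun a => mlext (g a) x).sum := by
  simp_rw [mlext, ← Multiset.sum_map_mul_right, Multiset.sum_map_sum]

lemma mlext_ite_disjoint {n : ℕ} (a : Finset (Fin n)) (x : Fin n → ℝ) :
    mlext (fun T => if Disjoint a T then 1 else 0) x = ∏ j ∈ a, (1 - x j) := by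
  have hfactor : ∀ T : Finset (Fin n),
      (if Disjoint a T then (1 : ℝ) else 0) * ∏ i ∈ T, x i = ∏ i ∈ T, if i ∈ a then 0 else x i := by
    intro T
    by_cases h : Disjoint a T
    · rw [if_pos h, one_mul]
      exact Finset.prod_congr rfl fun i hi => by rw [if_neg (Finset.disjoint_right.mp h hi)]
    · obtain ⟨i, hia, hiT⟩ := Finset.not_disjoint_iff.mp h
      rw [if_neg h, zero_mul]
      exact (Finset.prod_eq_zero hiT (by simp [hia])).symm
  simp_rw [mlext, hfactor, sum_prod_mul_prod_compl]
  rw [← Fintype.prod_ite_mem a]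
  exact Finset.prod_congr rfl fun i _ => by split_ifs <;> ring

/-- The expected number of sets of `C` missed by a random set containing each `j` independently
with probability `x j`. -/
noncomputable def uncovered {n : ℕ} (C : Multiset (Finset (Fin n))) (x : Fin n → ℝ) : ℝ :=
  (C.map fun s => ∏ j ∈ s, (1 - x j)).sum

lemma mlext_cov {n : ℕ} (C : Multiset (Finset (Fin n))) (x : Fin n → ℝ) :
    mlext (cov C) x = C.card - uncovered C x := by
  have hmin : ∀ s T : Finset (Fin n),
      min ((s ∩ T).card : ℝ) 1 = 1 - if Disjoint s T then 1 else 0 := by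
    intro s T
    by_cases h : Disjoint s T
    · simp [h, Finset.disjoint_iff_inter_eq_empty.mp h]
    · have : (1 : ℝ) ≤ (s ∩ T).card := by
        exact_mod_cast Finset.one_le_card.mpr (Finset.not_disjoint_iff_nonempty_inter.mp h)
      simp [h, this]
  have hcov : cov C = fun T => (C.map fun s => 1 - if Disjoint s T then 1 else 0).sum := by
    funext T
    simp_rw [cov, hmin]
  simp_rw [hcov, mlext_multiset_sum, mlext_sub, mlext_const, mlext_ite_disjoint,
    Multiset.sum_map_sub, uncovered]
  simp

lemma prod_add_eq_of_subsingleton {ι R : Type*} [DecidableEq ι] [CommRing R] (s : Finset ι)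
    (a b : ι → R) (hb : ∀ i ∈ s, ∀ j ∈ s, b i ≠ 0 → b j ≠ 0 → i = j) :
    ∏ i ∈ s, (a i + b i) = ∏ i ∈ s, a i + ∑ j ∈ s, b j * ∏ i ∈ s.erase j, a i := by
  by_cases h : ∃ j₀ ∈ s, b j₀ ≠ 0
  · obtain ⟨j₀, hj₀, hbj₀⟩ := h
    have hzero : ∀ j ∈ s, j ≠ j₀ → b j = 0 := fun j hj hne =>
      by_contra fun hbj => hne (hb j hj j₀ hj₀ hbj hbj₀)
    rw [Finset.sum_eq_single_of_mem j₀ hj₀ fun j hj hne => by rw [hzero j hj hne, zero_mul],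
      ← Finset.mul_prod_erase s _ hj₀, ← Finset.mul_prod_erase s a hj₀,
      Finset.prod_congr rfl fun j hj => by rw [hzero j (Finset.mem_of_mem_erase hj)
        (Finset.ne_of_mem_erase hj), add_zero]]
    ring
  · push Not at h
    rw [Finset.sum_eq_zero fun j hj => by rw [h j hj, zero_mul], add_zero]
    exact Finset.prod_congr rfl fun i hi => by rw [h i hi, add_zero]

/-- Minus the partial derivative of `uncovered C` in the direction of the coordinate `j`. -/
noncomputable def uncoveredSlope {n : ℕ} (C : Multiset (Finset (Fin n))) (x : Fin n → ℝ)
    (j : Fin n) : ℝ :=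
  (C.map fun s => if j ∈ s then ∏ i ∈ s.erase j, (1 - x i) else 0).sum

lemma uncovered_add_mul {n : ℕ} (C : Multiset (Finset (Fin n))) (W : Finset (Fin n))
    (hW : ∀ s ∈ C, #(s ∩ W) ≤ 1) (x d : Fin n → ℝ) (hd : ∀ j ∉ W, d j = 0) (τ : ℝ) :
    uncovered C (fun j => x j + τ * d j)
      = uncovered C x - τ * ∑ j, d j * uncoveredSlope C x j := by
  have hset : ∀ s ∈ C, ∏ j ∈ s, (1 - (x j + τ * d j))
      = ∏ j ∈ s, (1 - x j) - ∑ j, τ * (d j * if j ∈ s then ∏ i ∈ s.erase j, (1 - x i) else 0) := by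
    intro s hs
    have hsupp : ∀ i ∈ s, ∀ j ∈ s, -(τ * d i) ≠ 0 → -(τ * d j) ≠ 0 → i = j := by
      intro i hi j hj hdi hdj
      exact Finset.card_le_one.mp (hW s hs) i
        (Finset.mem_inter.mpr ⟨hi, by_contra fun h => hdi (by simp [hd i h])⟩) j
        (Finset.mem_inter.mpr ⟨hj, by_contra fun h => hdj (by simp [hd j h])⟩)
    simp_rw [sub_add_eq_sub_sub, sub_eq_add_neg (1 - x _)]
    rw [prod_add_eq_of_subsingleton s _ _ hsupp]
    simp only [mul_ite, mul_zero, Finset.sum_ite_mem, Finset.univ_inter, neg_mul,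
      Finset.sum_neg_distrib, mul_assoc, sub_eq_add_neg]
  rw [uncovered, Multiset.map_congr rfl hset, Multiset.sum_map_sub, Multiset.sum_map_sum,
    ← uncovered, Finset.mul_sum]
  simp_rw [uncoveredSlope, Multiset.sum_map_mul_left]

open Matrix in
lemma exists_ne_zero_mulVec_eq_zero {K ι κ : Type*} [Field K] [Fintype ι] [Fintype κ]
    (A : Matrix ι κ K) (h : Fintype.card ι < Fintype.card κ) : ∃ v ≠ 0, A *ᵥ v = 0 := by
  have hker : LinearMap.ker A.mulVecLin ≠ ⊥ :=
    LinearMap.ker_ne_bot_of_finrank_lt (by simpa using h)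
  obtain ⟨v, hv, hv0⟩ := (Submodule.ne_bot_iff _).mp hker
  exact ⟨v, hv0, hv⟩

lemma exists_subset_independent {α : Type*} [DecidableEq α] (N : α → Finset α)
    (hN : ∀ a, a ∈ N a) (hsymm : ∀ a b, b ∈ N a → a ∈ N b) {d : ℕ} (hd : ∀ a, #(N a) ≤ d)
    (A : Finset α) :
    ∃ W ⊆ A, (∀ a ∈ W, ∀ b ∈ W, b ∈ N a → a = b) ∧ #A ≤ #W * d := by
  induction A using Finset.strongInduction with
  | H A ih =>
  rcases A.eq_empty_or_nonempty with rfl | ⟨a, ha⟩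
  · exact ⟨∅, subset_rfl, by simp, by simp⟩
  obtain ⟨W, hWA, hWind, hWcard⟩ :=
    ih (A \ N a) ((Finset.ssubset_iff_of_subset Finset.sdiff_subset).mpr
      ⟨a, ha, fun h => (Finset.mem_sdiff.mp h).2 (hN a)⟩)
  have haW : a ∉ W := fun h => (Finset.mem_sdiff.mp (hWA h)).2 (hN a)
  refine ⟨insert a W, Finset.insert_subset ha (hWA.trans Finset.sdiff_subset), ?_, ?_⟩
  · have hfar : ∀ b ∈ W, b ∉ N a := fun b hb => (Finset.mem_sdiff.mp (hWA hb)).2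
    intro b hb c hc hbc
    rcases Finset.mem_insert.mp hb with rfl | hbW <;>
      rcases Finset.mem_insert.mp hc with rfl | hcW
    · rfl
    · exact absurd hbc (hfar c hcW)
    · exact absurd (hsymm _ _ hbc) (hfar b hbW)
    · exact hWind b hbW c hcW hbc
  · calc #A ≤ #(A \ N a) + #(N a) := Finset.card_le_card_sdiff_add_card
      _ ≤ #W * d + d := add_le_add hWcard (hd a)
      _ = #(insert a W) * d := by rw [Finset.card_insert_of_notMem haW]; ring

/-- The time at which the ray `τ ↦ y + τ * d`, `τ ≥ 0`, leaves `[0, 1]`. -/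
noncomputable def exitTime (y d : ℝ) : ℝ := if 0 < d then (1 - y) / d else y / -d

lemma exitTime_nonneg {y d : ℝ} (hy : y ∈ Set.Icc (0 : ℝ) 1) : 0 ≤ exitTime y d := by
  unfold exitTime
  split_ifs with hd
  · exact div_nonneg (by linarith [hy.2]) hd.le
  · exact div_nonneg hy.1 (by linarith)

lemma add_mul_mem_Icc_of_le_exitTime {y d τ : ℝ} (hy : y ∈ Set.Icc (0 : ℝ) 1) (hd : d ≠ 0)
    (hτ₀ : 0 ≤ τ) (hτ : τ ≤ exitTime y d) : y + τ * d ∈ Set.Icc (0 : ℝ) 1 := by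
  obtain ⟨hy₀, hy₁⟩ := hy
  unfold exitTime at hτ
  split_ifs at hτ with hpos
  · have := (le_div_iff₀ hpos).mp hτ
    constructor <;> nlinarith
  · have hneg : 0 < -d := by push Not at hpos; exact neg_pos.mpr (lt_of_le_of_ne hpos hd)
    have := (le_div_iff₀ hneg).mp hτ
    constructor <;> nlinarith

lemma add_exitTime_mul_notMem_Ioo (y : ℝ) {d : ℝ} (hd : d ≠ 0) :
    y + exitTime y d * d ∉ Set.Ioo (0 : ℝ) 1 := by
  unfold exitTime
  split_ifs with hpos
  · rw [div_mul_cancel₀ _ hd, add_sub_cancel]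
    exact fun h => h.2.false
  · rw [div_neg, neg_mul, div_mul_cancel₀ _ hd, add_neg_cancel]
    exact fun h => h.1.false

noncomputable def fractionalCoords {ι : Type*} [Fintype ι] (y : ι → ℝ) : Finset ι :=
  {p | y p ∈ Set.Ioo 0 1}

lemma exists_add_mul_fractionalCoords_lt {ι : Type*} [Fintype ι] (y d : ι → ℝ)
    (hy : ∀ p, y p ∈ Set.Icc (0 : ℝ) 1) (hd : d ≠ 0)
    (hsupp : ∀ p, d p ≠ 0 → y p ∈ Set.Ioo (0 : ℝ) 1) :
    ∃ τ : ℝ, (∀ p, y p + τ * d p ∈ Set.Icc (0 : ℝ) 1) ∧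
      #(fractionalCoords fun p => y p + τ * d p) < #(fractionalCoords y) := by
  classical
  have hmoving : (univ.filter fun p => d p ≠ 0).Nonempty := by
    obtain ⟨p, hp⟩ := Function.ne_iff.mp hd
    exact ⟨p, Finset.mem_filter.mpr ⟨Finset.mem_univ p, hp⟩⟩
  obtain ⟨p₀, hp₀, hmin⟩ := Finset.exists_min_image _ (fun p => exitTime (y p) (d p)) hmoving
  have hdp₀ : d p₀ ≠ 0 := (Finset.mem_filter.mp hp₀).2
  have hτ₀ : 0 ≤ exitTime (y p₀) (d p₀) := exitTime_nonneg (hy p₀)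
  refine ⟨exitTime (y p₀) (d p₀), fun p => ?_, Finset.card_lt_card ?_⟩
  · by_cases hdp : d p = 0
    · simpa [hdp] using hy p
    · exact add_mul_mem_Icc_of_le_exitTime (hy p) hdp hτ₀
        (hmin p (Finset.mem_filter.mpr ⟨Finset.mem_univ p, hdp⟩))
  · refine (Finset.ssubset_iff_of_subset fun p hp => ?_).mpr
      ⟨p₀, ?_, fun h => add_exitTime_mul_notMem_Ioo (y p₀) hdp₀ (Finset.mem_filter.mp h).2⟩
    · simp only [fractionalCoords, Finset.mem_filter, Finset.mem_univ, true_and] at hp ⊢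
      by_cases hdp : d p = 0
      · simpa [hdp] using hp
      · exact hsupp p hdp
    · simpa [fractionalCoords] using hsupp p₀ hdp₀

noncomputable def fractionalElements {n k : ℕ} (Y : Fin n → Fin k → ℝ) : Finset (Fin n) :=
  {j | ¬ ∀ ℓ, Y j ℓ = 0 ∨ Y j ℓ = 1}

lemma exists_ne_fractional_fractional {k : ℕ} (y : Fin k → ℝ) (hy : ∀ ℓ, 0 ≤ y ℓ ∧ y ℓ ≤ 1)
    (hsum : ∑ ℓ, y ℓ = 1) (hfrac : ¬ ∀ ℓ, y ℓ = 0 ∨ y ℓ = 1) :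
    ∃ ℓ₁ ℓ₂, ℓ₁ ≠ ℓ₂ ∧ y ℓ₁ ∈ Set.Ioo (0 : ℝ) 1 ∧ y ℓ₂ ∈ Set.Ioo (0 : ℝ) 1 := by
  push Not at hfrac
  obtain ⟨ℓ₁, h₀, h₁⟩ := hfrac
  have hℓ₁ : y ℓ₁ ∈ Set.Ioo (0 : ℝ) 1 :=
    ⟨lt_of_le_of_ne (hy ℓ₁).1 (Ne.symm h₀), lt_of_le_of_ne (hy ℓ₁).2 h₁⟩
  have hrest : ∑ ℓ ∈ univ.erase ℓ₁, y ℓ = 1 - y ℓ₁ := by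
    rw [← hsum, ← Finset.add_sum_erase _ _ (Finset.mem_univ ℓ₁), add_sub_cancel_left]
  obtain ⟨ℓ₂, hℓ₂, hpos⟩ : ∃ ℓ₂ ∈ univ.erase ℓ₁, (0 : ℝ) < y ℓ₂ :=
    Finset.exists_lt_of_sum_lt (by rw [hrest, Finset.sum_const_zero]; linarith [hℓ₁.2])
  have hle : y ℓ₂ ≤ 1 - y ℓ₁ :=
    hrest ▸ Finset.single_le_sum (fun ℓ _ => (hy ℓ).1) hℓ₂
  exact ⟨ℓ₁, ℓ₂, (Finset.ne_of_mem_erase hℓ₂).symm, hℓ₁, hpos, by linarith [hℓ₁.1]⟩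

lemma exists_direction_orthogonal {n k : ℕ} {κ : Type*} [Fintype κ] (Y : Fin n → Fin k → ℝ)
    (hY : IsFracColoring Y) (W : Finset (Fin n)) (hWY : W ⊆ fractionalElements Y)
    (g : κ → Fin k → Fin n → ℝ) (hcard : Fintype.card κ * k < #W) :
    ∃ D : Fin n → Fin k → ℝ, D ≠ 0 ∧ (∀ j, ∑ ℓ, D j ℓ = 0) ∧
      (∀ j ℓ, D j ℓ ≠ 0 → Y j ℓ ∈ Set.Ioo (0 : ℝ) 1) ∧ (∀ j ∉ W, ∀ ℓ, D j ℓ = 0) ∧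
      ∀ q ℓ, ∑ j, D j ℓ * g q ℓ j = 0 := by
  classical
  have hcolors : ∀ w : W, ∃ σ : Fin k × Fin k,
      σ.1 ≠ σ.2 ∧ Y w σ.1 ∈ Set.Ioo (0 : ℝ) 1 ∧ Y w σ.2 ∈ Set.Ioo (0 : ℝ) 1 := fun w => by
    obtain ⟨ℓ₁, ℓ₂, h⟩ := exists_ne_fractional_fractional (Y w) (hY w).1 (hY w).2
      (by simpa [fractionalElements] using hWY w.2)
    exact ⟨(ℓ₁, ℓ₂), h⟩
  choose σ hσ using hcolors
  let ε : W → Fin k → ℝ := fun w => Pi.single (σ w).1 1 - Pi.single (σ w).2 1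
  have hε_sum : ∀ w, ∑ ℓ, ε w ℓ = 0 := fun w => by
    simp [ε, Finset.sum_sub_distrib]
  have hε_one : ∀ w, ε w (σ w).1 = 1 := fun w => by
    simp [ε, (hσ w).1]
  have hε_supp : ∀ w ℓ, ε w ℓ ≠ 0 → Y w ℓ ∈ Set.Ioo (0 : ℝ) 1 := fun w ℓ h => by
    by_cases h₁ : ℓ = (σ w).1
    · exact h₁ ▸ (hσ w).2.1
    by_cases h₂ : ℓ = (σ w).2
    · exact h₂ ▸ (hσ w).2.2
    simp [ε, h₁, h₂] at h
  obtain ⟨v, hv0, hv⟩ := exists_ne_zero_mulVec_eq_zero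
    (fun (p : κ × Fin k) (w : W) => ε w p.2 * g p.1 p.2 w) (by simpa using hcard)
  let D : Fin n → Fin k → ℝ := fun j ℓ => if h : j ∈ W then v ⟨j, h⟩ * ε ⟨j, h⟩ ℓ else 0
  have hD : ∀ (w : W) ℓ, D w ℓ = v w * ε w ℓ := fun w ℓ => dif_pos w.2
  have hD_off : ∀ j ∉ W, ∀ ℓ, D j ℓ = 0 := fun j hj ℓ => dif_neg hj
  refine ⟨D, ?_, fun j => ?_, fun j ℓ hjℓ => ?_, hD_off, fun q ℓ => ?_⟩
  · obtain ⟨w, hw⟩ := Function.ne_iff.mp hv0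
    refine Function.ne_iff.mpr ⟨w, Function.ne_iff.mpr ⟨(σ w).1, ?_⟩⟩
    simpa [hD, hε_one] using hw
  · by_cases hj : j ∈ W
    · simp_rw [hD ⟨j, hj⟩, ← Finset.mul_sum, hε_sum, mul_zero]
    · exact Finset.sum_eq_zero fun ℓ _ => hD_off j hj ℓ
  · by_cases hj : j ∈ W
    · rw [hD ⟨j, hj⟩] at hjℓ
      exact hε_supp ⟨j, hj⟩ ℓ (right_ne_zero_of_mul hjℓ)
    · exact absurd (hD_off j hj ℓ) hjℓ
  · rw [← Finset.sum_subset (Finset.subset_univ W) fun j _ hj => by rw [hD_off j hj, zero_mul],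
      ← Finset.sum_coe_sort W]
    simpa [hD, Matrix.mulVec, dotProduct, mul_comm, mul_left_comm] using congrFun hv (q, ℓ)

lemma isFracColoring_const {k : ℕ} (hk : 0 < k) :
    IsFracColoring fun (_ : Fin n) (_ : Fin k) => (k : ℝ)⁻¹ := by
  have hk' : (1 : ℝ) ≤ k := by exact_mod_cast hk
  refine fun _ => ⟨fun _ => ⟨by positivity, inv_le_one_of_one_le₀ hk'⟩, ?_⟩
  simp [(by positivity : (k : ℝ) ≠ 0)]

lemma isFracColoring_single {n k : ℕ} (ℓ₀ : Fin k) :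
    IsFracColoring fun (_ : Fin n) => (Pi.single ℓ₀ 1 : Fin k → ℝ) :=
  fun _ => ⟨fun ℓ => by by_cases h : ℓ = ℓ₀ <;> simp [h], by simp⟩

lemma fractionalElements_single {n k : ℕ} (ℓ₀ : Fin k) :
    fractionalElements (fun (_ : Fin n) => (Pi.single ℓ₀ 1 : Fin k → ℝ)) = ∅ := by
  refine Finset.eq_empty_of_forall_notMem fun j hj => ?_
  simp only [fractionalElements, Finset.mem_filter, Finset.mem_univ, true_and] at hj
  exact hj fun ℓ => by by_cases h : ℓ = ℓ₀ <;> simp [h]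

section Family

variable {n m t s : ℕ} (S : Fin m → Multiset (Finset (Fin n)))

noncomputable def neighborhood (j : Fin n) : Finset (Fin n) :=
  insert j (univ.biUnion fun i => ((S i).filter (j ∈ ·)).toFinset.biUnion id)

lemma mem_neighborhood {j j' : Fin n} :
    j' ∈ neighborhood S j ↔ j' = j ∨ ∃ i, ∃ s' ∈ S i, j ∈ s' ∧ j' ∈ s' := by
  simp [neighborhood, and_assoc]

lemma mem_neighborhood_self (j : Fin n) : j ∈ neighborhood S j :=
  (mem_neighborhood S).mpr (Or.inl rfl)

lemma mem_neighborhood_comm {j j' : Fin n} (h : j' ∈ neighborhood S j) : j ∈ neighborhood S j' := by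
  rcases (mem_neighborhood S).mp h with rfl | ⟨i, s', hs', hj, hj'⟩
  exacts [mem_neighborhood_self S _, (mem_neighborhood S).mpr (Or.inr ⟨i, s', hs', hj', hj⟩)]

lemma card_neighborhood_le (hts : 0 < t * s)
    (hsparse : ∀ j : Fin n, (∑ i, ((S i).filter (fun s' => j ∈ s')).card) ≤ t)
    (hsize : ∀ i : Fin m, ∀ s' ∈ S i, s'.card ≤ s) (j : Fin n) :
    #(neighborhood S j) ≤ t * s := by
  set U := univ.biUnion fun i => ((S i).filter (j ∈ ·)).toFinset.biUnion id
  have hU : #U ≤ t * s := calc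
    #U ≤ ∑ i, #(((S i).filter (j ∈ ·)).toFinset.biUnion id) := Finset.card_biUnion_le
    _ ≤ ∑ i, ∑ s' ∈ ((S i).filter (j ∈ ·)).toFinset, s := by
      gcongr with i _
      refine Finset.card_biUnion_le.trans (Finset.sum_le_sum fun s' hs' => hsize i s' ?_)
      exact Multiset.mem_of_mem_filter (Multiset.mem_toFinset.mp hs')
    _ ≤ ∑ i, ((S i).filter (j ∈ ·)).card * s := by
      gcongr with i _
      rw [Finset.sum_const, smul_eq_mul]
      exact Nat.mul_le_mul_right s (Multiset.toFinset_card_le _)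
    _ ≤ t * s := by rw [← Finset.sum_mul]; exact Nat.mul_le_mul_right s (hsparse j)
  change #(insert j U) ≤ t * s
  by_cases hj : j ∈ U
  · rwa [Finset.insert_eq_of_mem hj]
  · have hUempty : U = ∅ := Finset.eq_empty_of_forall_notMem fun j' hj' => hj <| by
      simp only [U, Finset.mem_biUnion, Multiset.mem_toFinset, Multiset.mem_filter] at hj' ⊢
      obtain ⟨i, _, s', ⟨hs', hjs'⟩, _⟩ := hj'
      exact ⟨i, Finset.mem_univ i, s', ⟨hs', hjs'⟩, hjs'⟩
    rwa [hUempty, insert_empty_eq, Finset.card_singleton]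

lemma exists_coloring_fractionalCoords_lt {k : ℕ} (hts : 0 < t * s)
    (hsparse : ∀ j : Fin n, (∑ i, ((S i).filter (fun s' => j ∈ s')).card) ≤ t)
    (hsize : ∀ i : Fin m, ∀ s' ∈ S i, s'.card ≤ s)
    (Y : Fin n → Fin k → ℝ) (hY : IsFracColoring Y)
    (hZ : m * k * (t * s) < #(fractionalElements Y)) :
    ∃ Y' : Fin n → Fin k → ℝ, IsFracColoring Y' ∧
      (∀ i ℓ, uncovered (S i) (fun j => Y' j ℓ) = uncovered (S i) (fun j => Y j ℓ)) ∧
      #(fractionalCoords fun p : Fin n × Fin k => Y' p.1 p.2)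
        < #(fractionalCoords fun p : Fin n × Fin k => Y p.1 p.2) := by
  classical
  obtain ⟨W, hWY, hWind, hWcard⟩ := exists_subset_independent (neighborhood S)
    (mem_neighborhood_self S) (fun _ _ => mem_neighborhood_comm S)
    (card_neighborhood_le S hts hsparse hsize) (fractionalElements Y)
  have hW : ∀ i, ∀ s' ∈ S i, #(s' ∩ W) ≤ 1 := fun i s' hs' =>
    Finset.card_le_one.mpr fun a ha b hb => by
      obtain ⟨has, haW⟩ := Finset.mem_inter.mp ha
      obtain ⟨hbs, hbW⟩ := Finset.mem_inter.mp hb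
      exact hWind a haW b hbW ((mem_neighborhood S).mpr (Or.inr ⟨i, s', hs', has, hbs⟩))
  obtain ⟨D, hD0, hDsum, hDsupp, hDoff, hDslope⟩ := exists_direction_orthogonal Y hY W hWY
    (fun i ℓ => uncoveredSlope (S i) fun j => Y j ℓ)
    (by simpa using Nat.lt_of_mul_lt_mul_right (hZ.trans_le hWcard))
  obtain ⟨τ, hbox, hfewer⟩ := exists_add_mul_fractionalCoords_lt
    (fun p : Fin n × Fin k => Y p.1 p.2) (fun p => D p.1 p.2) (fun p => (hY p.1).1 p.2)
    (fun h => hD0 (funext fun j => funext fun ℓ => congrFun h (j, ℓ))) (fun p => hDsupp p.1 p.2)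
  refine ⟨fun j ℓ => Y j ℓ + τ * D j ℓ, fun j => ⟨fun ℓ => hbox (j, ℓ), ?_⟩, fun i ℓ => ?_, hfewer⟩
  · rw [Finset.sum_add_distrib, ← Finset.mul_sum, hDsum, mul_zero, add_zero]
    exact (hY j).2
  · rw [uncovered_add_mul (S i) W (hW i) _ _ (fun j hj => hDoff j hj ℓ), hDslope, mul_zero,
      sub_zero]

def IsBalanced {k : ℕ} (Y : Fin n → Fin k → ℝ) : Prop :=
  ∀ i ℓ ℓ', uncovered (S i) (fun j => Y j ℓ) = uncovered (S i) (fun j => Y j ℓ')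

lemma exists_isBalanced_card_fractionalElements_le {k : ℕ} (hk : 0 < k) (hts : 0 < t * s)
    (hsparse : ∀ j : Fin n, (∑ i, ((S i).filter (fun s' => j ∈ s')).card) ≤ t)
    (hsize : ∀ i : Fin m, ∀ s' ∈ S i, s'.card ≤ s) :
    ∃ Y : Fin n → Fin k → ℝ, IsFracColoring Y ∧ IsBalanced S Y ∧
      #(fractionalElements Y) ≤ m * k * (t * s) := by
  let size : (Fin n → Fin k → ℝ) → ℕ := fun Y =>
    #(fractionalCoords fun p : Fin n × Fin k => Y p.1 p.2)
  obtain ⟨Y, ⟨hY, hbal⟩, hmin⟩ := (measure size).wf.has_min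
    {Y | IsFracColoring Y ∧ IsBalanced S Y} ⟨_, isFracColoring_const hk, fun _ _ _ => rfl⟩
  refine ⟨Y, hY, hbal, not_lt.mp fun hZ => ?_⟩
  obtain ⟨Y', hY', hpres, hfewer⟩ :=
    exists_coloring_fractionalCoords_lt S hts hsparse hsize Y hY hZ
  exact hmin Y' ⟨hY', fun i ℓ ℓ' => by rw [hpres, hpres, hbal]⟩ hfewer

lemma isBalanced_of_mul_eq_zero {k : ℕ} (hts : t * s = 0)
    (hsparse : ∀ j : Fin n, (∑ i, ((S i).filter (fun s' => j ∈ s')).card) ≤ t)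
    (hsize : ∀ i : Fin m, ∀ s' ∈ S i, s'.card ≤ s) (Y : Fin n → Fin k → ℝ) :
    IsBalanced S Y := by
  have hempty : ∀ i, ∀ s' ∈ S i, s' = ∅ := fun i s' hs' => by
    rcases Nat.mul_eq_zero.mp hts with rfl | rfl
    · refine Finset.eq_empty_of_forall_notMem fun j hj => ?_
      have hpos : 0 < ((S i).filter (j ∈ ·)).card :=
        Multiset.card_pos_iff_exists_mem.mpr ⟨s', Multiset.mem_filter.mpr ⟨hs', hj⟩⟩
      have := (Finset.single_le_sum (fun i _ => Nat.zero_le _) (Finset.mem_univ i)).trans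
        (hsparse j)
      omega
    · exact Finset.card_eq_zero.mp (Nat.le_zero.mp (hsize i s' hs'))
  intro i ℓ ℓ'
  exact congrArg Multiset.sum (Multiset.map_congr rfl fun s' hs' => by simp [hempty i s' hs'])

end Family

/-- for a `t`-sparse family of coverage functions with sets of size at
most `s`, there is a fractional `k`-coloring with at most `m·k·t·s` fractional
elements whose multilinear-extension values agree across all colors. -/
theorem fractional_coloring_few_fractional_elements
    (n m t k s : ℕ) (hk : 2 ≤ k)
    (S : Fin m → Multiset (Finset (Fin n)))
    (hsparse : ∀ j : Fin n, (∑ i, ((S i).filter (fun s' => j ∈ s')).card) ≤ t)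
    (hsize : ∀ i : Fin m, ∀ s' ∈ S i, s'.card ≤ s) :
    ∃ Y : Fin n → Fin k → ℝ, IsFracColoring Y ∧
      (∃ Z : Finset (Fin n),
        (∀ j : Fin n, j ∈ Z ↔ ¬ (∀ ℓ, Y j ℓ = 0 ∨ Y j ℓ = 1)) ∧
        Z.card ≤ m * k * t * s) ∧
      (∀ (i : Fin m) (ℓ ℓ' : Fin k),
        mlext (cov (S i)) (fun j => Y j ℓ) = mlext (cov (S i)) (fun j => Y j ℓ')) := by
  have hk₀ : 0 < k := by omega
  obtain ⟨Y, hY, hbal, hfew⟩ : ∃ Y : Fin n → Fin k → ℝ, IsFracColoring Y ∧ IsBalanced S Y ∧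
      #(fractionalElements Y) ≤ m * k * t * s := by
    rcases Nat.eq_zero_or_pos (t * s) with hts | hts
    · exact ⟨_, isFracColoring_single ⟨0, hk₀⟩, isBalanced_of_mul_eq_zero S hts hsparse hsize _,
        by simp [fractionalElements_single]⟩
    · rw [mul_assoc (m * k)]
      exact exists_isBalanced_card_fractionalElements_le S hk₀ hts hsparse hsize
  refine ⟨Y, hY, ⟨fractionalElements Y, fun j => by simp [fractionalElements], hfew⟩,
    fun i ℓ ℓ' => ?_⟩
  rw [mlext_cov, mlext_cov, hbal i ℓ ℓ']
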